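/- Let 1/2 < α ≤ 2/3. There exists r₀ > 0 such that the first component u₁ of K ∗ ω^α_+ is nonnegative on B⁺(0;r₀) and ∫_{B⁺(0;r₀)} u₁(x) |ω^α_+(x)|² dx = +∞. In particular, the product (K ∗ ω^α_+) |ω^α_+|² is not locally integrable on ℝ². -/

import Mathlib

/-!
Write `K₁(z) = -z₂ / (2π|z|²)` for the first component of the kernel. Below the line `y₂ = x₂`
the bounds `ω^α_+(y) ≤ 1/|y|` and `|K₁(x - y)| ≤ min (1/|x - y|, x₂/|x - y|²) / (2π)` make the
contribution of `ω^α_+` to `u₁(x)` at least `-7`, uniformly in `x`. Above that line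
`K₁(x - y) ≥ 0`, and on each of the disjoint balls `D_m = B((0, 3e^{-m}/4), e^{-m}/8)` with
`2 ≤ m ≤ log(1/|x|) - 2` one has `ω^α_+ ≈ e^m / m^α` and `K₁(x - ·) ≈ e^m`, a contribution
`≳ m^{-α}`. Hence `u₁(x) ≥ c log(1/|x|)^{1-α} - 7`, which is positive near `0`. On `D_n` the
integrand `u₁ |ω^α_+|²` is then `≳ n^{1-α} e^{2n} / n^{2α}` while `|D_n| ≈ e^{-2n}`, so the
integral over `D_n` is `≳ n^{1-3α} ≥ 1/n` because `α ≤ 2/3`, and the harmonic series diverges.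
-/

open MeasureTheory Real Metric Filter
open scoped ENNReal Topology

/-- The plane `ℝ²` with the Euclidean norm. -/
noncomputable abbrev E2 : Type := EuclideanSpace ℝ (Fin 2)

/-- The 2D Biot–Savart kernel `K(x) = x^⊥ / (2π|x|²)`. -/
noncomputable def K2 (x : E2) : E2 :=
  (2 * Real.pi * ‖x‖ ^ 2)⁻¹ • (WithLp.equiv 2 (Fin 2 → ℝ)).symm ![-(x 1), x 0]

/-- The velocity field `u = K ∗ ω` obtained from a vorticity `ω` by the Biot–Savart law. -/
noncomputable def vel (ω : E2 → ℝ) (x : E2) : E2 := ∫ y, ω y • K2 (x - y)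

/-- The vorticity `ω^α_+`, equal to `1/(|x| |log|x||^α)` on the upper half-disk
`B⁺(0;1/3)` and zero elsewhere. -/
noncomputable def omegaPlus (α : ℝ) (x : E2) : ℝ :=
  if ‖x‖ < 1/3 ∧ 0 < x 1 then 1 / (‖x‖ * |Real.log ‖x‖| ^ α) else 0

open Set

namespace CubicTerm

lemma abs_apply_le_norm (y : E2) (i : Fin 2) : |y i| ≤ ‖y‖ := by
  simpa using PiLp.norm_apply_le y i

lemma measurable_apply (i : Fin 2) : Measurable fun y : E2 => y i :=
  (EuclideanSpace.proj (𝕜 := ℝ) i).measurable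

lemma norm_pos_of_apply_one_pos {y : E2} (h : 0 < y 1) : 0 < ‖y‖ :=
  h.trans_le ((le_abs_self _).trans (abs_apply_le_norm y 1))

/-! ### Radial integrals in the plane -/

lemma integral_comp_norm (f : ℝ → ℝ) :
    ∫ y : E2, f ‖y‖ = 2 * π * ∫ r in Ioi 0, r * f r := by
  rw [integral_fun_norm_addHaar volume f]
  simp [Measure.real, finrank_euclideanSpace, ENNReal.toReal_ofReal pi_pos.le]
  ring

lemma integrable_comp_norm_iff {f : ℝ → ℝ} :
    Integrable (fun y : E2 => f ‖y‖) ↔ IntegrableOn (fun r => r * f r) (Ioi 0) := by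
  rw [integrable_fun_norm_addHaar volume]
  simp [finrank_euclideanSpace]

lemma indicator_ball_inv_norm_eq (r : ℝ) :
    (ball (0 : E2) r).indicator (fun z => ‖z‖⁻¹) = fun y => (Iio r).indicator (·⁻¹) ‖y‖ := by
  ext y; simp [indicator]

lemma indicator_compl_ball_inv_norm_pow_eq (r : ℝ) :
    (ball (0 : E2) r)ᶜ.indicator (fun z => ‖z‖⁻¹ ^ 3) =
      fun y => (Ici r).indicator (·⁻¹ ^ 3) ‖y‖ := by
  ext y; simp [indicator]

lemma mul_indicator_Iio_inv_eqOn (r : ℝ) :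
    EqOn (fun t => t * (Iio r).indicator (·⁻¹) t) ((Iio r).indicator 1) (Ioi 0) := by
  intro t ht
  by_cases htr : t < r <;> simp [htr, mul_inv_cancel₀ (mem_Ioi.1 ht).ne']

lemma mul_indicator_Ici_inv_pow_eqOn (r : ℝ) :
    EqOn (fun t => t * (Ici r).indicator (·⁻¹ ^ 3) t)
      ((Ici r).indicator fun t => t ^ (-2 : ℝ)) (Ioi 0) := by
  intro t ht
  by_cases htr : r ≤ t
  · simp only [indicator_of_mem (mem_Ici.2 htr)]
    rw [rpow_neg (mem_Ioi.1 ht).le, rpow_two]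
    field_simp
  · simp [htr]

lemma integrable_indicator_ball_inv_norm (r : ℝ) :
    Integrable ((ball (0 : E2) r).indicator fun z => ‖z‖⁻¹) := by
  rw [indicator_ball_inv_norm_eq, integrable_comp_norm_iff,
    integrableOn_congr_fun (mul_indicator_Iio_inv_eqOn r) measurableSet_Ioi]
  refine (integrable_indicator_iff measurableSet_Iio).2 (integrableOn_const ?_)
  rw [Measure.restrict_apply measurableSet_Iio, inter_comm, Ioi_inter_Iio]
  simp [Real.volume_Ioo]

lemma integral_indicator_ball_inv_norm {r : ℝ} (hr : 0 ≤ r) :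
    ∫ y, (ball (0 : E2) r).indicator (fun z => ‖z‖⁻¹) y = 2 * π * r := by
  rw [indicator_ball_inv_norm_eq, integral_comp_norm,
    setIntegral_congr_fun measurableSet_Ioi (mul_indicator_Iio_inv_eqOn r),
    integral_indicator_one measurableSet_Iio, Measure.real,
    Measure.restrict_apply measurableSet_Iio, inter_comm, Ioi_inter_Iio, Real.volume_Ioo]
  simp [hr]

lemma integrable_indicator_compl_ball_inv_norm_pow {r : ℝ} (hr : 0 < r) :
    Integrable ((ball (0 : E2) r)ᶜ.indicator fun z => ‖z‖⁻¹ ^ 3) := by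
  rw [indicator_compl_ball_inv_norm_pow_eq, integrable_comp_norm_iff,
    integrableOn_congr_fun (mul_indicator_Ici_inv_pow_eqOn r) measurableSet_Ioi,
    IntegrableOn, integrable_indicator_iff measurableSet_Ici, IntegrableOn,
    Measure.restrict_restrict measurableSet_Ici, inter_eq_left.2 (Ici_subset_Ioi.2 hr),
    ← IntegrableOn, integrableOn_Ici_iff_integrableOn_Ioi]
  exact integrableOn_Ioi_rpow_of_lt (by norm_num) hr

lemma integral_indicator_compl_ball_inv_norm_pow {r : ℝ} (hr : 0 < r) :
    ∫ y, (ball (0 : E2) r)ᶜ.indicator (fun z => ‖z‖⁻¹ ^ 3) y = 2 * π / r := by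
  rw [indicator_compl_ball_inv_norm_pow_eq, integral_comp_norm,
    setIntegral_congr_fun measurableSet_Ioi (mul_indicator_Ici_inv_pow_eqOn r),
    setIntegral_indicator measurableSet_Ici, inter_eq_right.2 (Ici_subset_Ioi.2 hr),
    integral_Ici_eq_integral_Ioi, integral_Ioi_rpow_of_lt (by norm_num) hr]
  norm_num [rpow_neg_one]
  ring

/-! ### The kernel and the vorticity -/

lemma K2_apply_zero (z : E2) : K2 z 0 = (2 * π * ‖z‖ ^ 2)⁻¹ * -z 1 := by
  simp [K2]

lemma abs_K2_apply_zero (z : E2) : |K2 z 0| = |z 1| / (2 * π * ‖z‖ ^ 2) := by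
  rw [K2_apply_zero, abs_mul, abs_neg, abs_of_nonneg (by positivity), inv_mul_eq_div]

lemma K2_sub_apply_zero_nonneg {x y : E2} (h : x 1 ≤ y 1) : 0 ≤ K2 (x - y) 0 := by
  rw [K2_apply_zero]
  have : 0 ≤ -(x - y) 1 := by simp [h]
  positivity

lemma norm_K2 (z : E2) : ‖K2 z‖ = (2 * π * ‖z‖)⁻¹ := by
  have hrot : ‖(WithLp.equiv 2 (Fin 2 → ℝ)).symm ![-(z 1), z 0]‖ = ‖z‖ := by
    simp [EuclideanSpace.norm_eq, Fin.sum_univ_two, add_comm]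
  rw [K2, norm_smul, hrot, Real.norm_of_nonneg (by positivity)]
  rcases (norm_nonneg z).eq_or_lt with hz | hz
  · simp [← hz]
  · field_simp

lemma measurable_K2 : Measurable K2 := by
  have hrot : Continuous fun x : E2 => (WithLp.equiv 2 (Fin 2 → ℝ)).symm ![-(x 1), x 0] :=
    (PiLp.continuous_toLp 2 _).comp (continuous_pi fun i => by fin_cases i <;> simp <;> fun_prop)
  have hscal : Measurable fun x : E2 => (2 * π * ‖x‖ ^ 2)⁻¹ := by fun_prop
  exact hscal.smul hrot.measurable

lemma inv_two_pi_norm_sub_le {x y : E2} (hx : 0 < ‖x‖) (h : ‖x‖ / 2 ≤ ‖x - y‖) :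
    (2 * π * ‖x - y‖)⁻¹ ≤ (π * ‖x‖)⁻¹ :=
  inv_anti₀ (by positivity) (by nlinarith [pi_pos])

lemma vel_apply_zero {ω : E2 → ℝ} {x : E2} (h : Integrable fun y => ω y • K2 (x - y)) :
    vel ω x 0 = ∫ y, ω y * K2 (x - y) 0 :=
  ((EuclideanSpace.proj (𝕜 := ℝ) (0 : Fin 2)).integral_comp_comm h).symm

lemma integrable_mul_K2_apply_zero {ω : E2 → ℝ} {x : E2}
    (h : Integrable fun y => ω y • K2 (x - y)) : Integrable fun y => ω y * K2 (x - y) 0 :=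
  (EuclideanSpace.proj (𝕜 := ℝ) (0 : Fin 2)).integrable_comp h

variable {α : ℝ}

lemma omegaPlus_nonneg (α : ℝ) (y : E2) : 0 ≤ omegaPlus α y := by
  unfold omegaPlus
  split_ifs <;> positivity

lemma measurable_omegaPlus (α : ℝ) : Measurable (omegaPlus α) := by
  unfold omegaPlus
  apply Measurable.ite _ (by fun_prop) measurable_const
  exact (measurableSet_lt measurable_norm measurable_const).inter
    (measurableSet_lt measurable_const (measurable_apply 1))

lemma one_lt_neg_log {t : ℝ} (h0 : 0 < t) (h : t < 1 / 3) : 1 < -log t := by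
  have he : 1 / 3 < exp (-1) := by
    rw [exp_neg, one_div]
    exact inv_strictAnti₀ (exp_pos 1) (by linarith [exp_one_lt_d9])
  linarith [(log_lt_iff_lt_exp h0).2 (h.trans he)]

lemma omegaPlus_eq_of_norm_lt {y : E2} (h3 : ‖y‖ < 1 / 3) (h1 : 0 < y 1) :
    omegaPlus α y = (‖y‖ * (-log ‖y‖) ^ α)⁻¹ := by
  have hy := norm_pos_of_apply_one_pos h1
  rw [omegaPlus, if_pos ⟨h3, h1⟩, one_div,
    abs_of_neg (by linarith [one_lt_neg_log hy h3] : log ‖y‖ < 0)]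

lemma norm_lt_and_pos_of_omegaPlus_ne_zero {y : E2} (h : omegaPlus α y ≠ 0) :
    ‖y‖ < 1 / 3 ∧ 0 < y 1 := by
  by_contra hy
  exact h (if_neg hy)

lemma omegaPlus_le_inv_norm (hα : 0 ≤ α) (y : E2) : omegaPlus α y ≤ ‖y‖⁻¹ := by
  by_cases hω : omegaPlus α y = 0
  · rw [hω]; positivity
  obtain ⟨h3, h1⟩ := norm_lt_and_pos_of_omegaPlus_ne_zero hω
  have hy := norm_pos_of_apply_one_pos h1
  rw [omegaPlus_eq_of_norm_lt h3 h1]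
  refine inv_anti₀ hy (le_mul_of_one_le_right hy.le (one_le_rpow ?_ hα))
  linarith [one_lt_neg_log hy h3]

lemma omegaPlus_le_indicator (hα : 0 ≤ α) (y : E2) :
    omegaPlus α y ≤ (ball (0 : E2) (1 / 3)).indicator (fun z => ‖z‖⁻¹) y := by
  by_cases hω : omegaPlus α y = 0
  · rw [hω]; exact indicator_nonneg (fun _ _ => by positivity) y
  rw [indicator_of_mem (mem_ball_zero_iff.2 (norm_lt_and_pos_of_omegaPlus_ne_zero hω).1)]
  exact omegaPlus_le_inv_norm hα y

lemma integrable_omegaPlus (hα : 0 ≤ α) : Integrable (omegaPlus α) :=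
  (integrable_indicator_ball_inv_norm _).mono' (measurable_omegaPlus α).aestronglyMeasurable
    (Eventually.of_forall fun y => by
      simpa [abs_of_nonneg (omegaPlus_nonneg α y)] using omegaPlus_le_indicator hα y)

lemma exp_div_rpow_le_omegaPlus (hα : 0 ≤ α) {t : ℝ} {y : E2} (h3 : ‖y‖ < 1 / 3)
    (h1 : 0 < y 1) (hlo : exp (-(t + 1)) ≤ ‖y‖) (hhi : ‖y‖ ≤ exp (-t)) :
    exp t / (t + 1) ^ α ≤ omegaPlus α y := by
  have hy : 0 < ‖y‖ := (exp_pos _).trans_le hlo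
  have hlog : -log ‖y‖ ≤ t + 1 := by linarith [(le_log_iff_exp_le hy).2 hlo]
  have hL : 0 < -log ‖y‖ := by linarith [one_lt_neg_log hy h3]
  have hbound : ‖y‖ * (-log ‖y‖) ^ α ≤ exp (-t) * (t + 1) ^ α :=
    mul_le_mul hhi (rpow_le_rpow hL.le hlog hα) (by positivity) (exp_pos _).le
  rw [omegaPlus_eq_of_norm_lt h3 h1]
  calc exp t / (t + 1) ^ α = (exp (-t) * (t + 1) ^ α)⁻¹ := by
        rw [exp_neg, mul_inv, inv_inv, div_eq_mul_inv]
    _ ≤ (‖y‖ * (-log ‖y‖) ^ α)⁻¹ := inv_anti₀ (by positivity) hbound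

/-! ### The integrand `ω^α_+(y) K(x - y)` -/

lemma omegaPlus_mul_inv_le_of_near (hα : 0 ≤ α) {x y : E2} (h : ‖y - x‖ < ‖x‖ / 2) :
    omegaPlus α y * (2 * π * ‖x - y‖)⁻¹ ≤ (π * ‖x‖)⁻¹ * ‖y - x‖⁻¹ := by
  have hx : 0 < ‖x‖ := by linarith [norm_nonneg (y - x)]
  have hy : ‖x‖ / 2 ≤ ‖y‖ := by linarith [norm_sub_norm_le x y, norm_sub_rev x y]
  calc omegaPlus α y * (2 * π * ‖x - y‖)⁻¹ ≤ (‖x‖ / 2)⁻¹ * (2 * π * ‖y - x‖)⁻¹ := by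
        rw [norm_sub_rev]
        gcongr
        exact (omegaPlus_le_inv_norm hα y).trans (inv_anti₀ (by positivity) hy)
    _ = (π * ‖x‖)⁻¹ * ‖y - x‖⁻¹ := by field_simp

lemma norm_omegaPlus_smul_K2_le (hα : 0 ≤ α) {x : E2} (hx : x ≠ 0) (y : E2) :
    ‖omegaPlus α y • K2 (x - y)‖ ≤
      (π * ‖x‖)⁻¹ * ((ball 0 (‖x‖ / 2)).indicator (fun z => ‖z‖⁻¹) (y - x) + omegaPlus α y) := by
  have hx' : 0 < ‖x‖ := norm_pos_iff.2 hx
  have hω := omegaPlus_nonneg α y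
  rw [norm_smul, norm_K2, Real.norm_of_nonneg hω]
  rcases lt_or_ge ‖y - x‖ (‖x‖ / 2) with hyx | hyx
  · rw [indicator_of_mem (mem_ball_zero_iff.2 hyx), mul_add]
    have : 0 ≤ (π * ‖x‖)⁻¹ * omegaPlus α y := by positivity
    linarith [omegaPlus_mul_inv_le_of_near hα hyx]
  · rw [indicator_of_notMem (by simpa using hyx), zero_add, mul_comm _ (omegaPlus α y)]
    rw [norm_sub_rev] at hyx
    exact mul_le_mul_of_nonneg_left (inv_two_pi_norm_sub_le hx' hyx) hω

lemma integrable_omegaPlus_smul_K2 (hα : 0 ≤ α) {x : E2} (hx : x ≠ 0) :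
    Integrable fun y => omegaPlus α y • K2 (x - y) :=
  ((((integrable_indicator_ball_inv_norm _).comp_sub_right x).add
    (integrable_omegaPlus hα)).const_mul _).mono'
    ((measurable_omegaPlus α).smul (measurable_K2.comp (by fun_prop))).aestronglyMeasurable
    (Eventually.of_forall (norm_omegaPlus_smul_K2_le hα hx))

/-- The three terms bound the integrand below the line `y₂ = x₂` for `|y - x| < |x|/2`,
for `|y| < 2|x|` and for `|y| ≥ 2|x|`; only the last one uses `|x₂ - y₂| ≤ x₂` there. -/
noncomputable def lowerHalfMajorant (x y : E2) : ℝ :=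
  (π * ‖x‖)⁻¹ * ((ball 0 (‖x‖ / 2)).indicator (fun z => ‖z‖⁻¹) (y - x) +
      (ball 0 (2 * ‖x‖)).indicator (fun z => ‖z‖⁻¹) y) +
    2 * ‖x‖ / π * (ball 0 (2 * ‖x‖))ᶜ.indicator (fun z => ‖z‖⁻¹ ^ 3) y

lemma lowerHalfMajorant_nonneg (x y : E2) : 0 ≤ lowerHalfMajorant x y := by
  have := indicator_nonneg (s := ball (0 : E2) (‖x‖ / 2)) (f := fun z => ‖z‖⁻¹)
    (fun _ _ => by positivity) (y - x)
  have := indicator_nonneg (s := ball (0 : E2) (2 * ‖x‖)) (f := fun z => ‖z‖⁻¹)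
    (fun _ _ => by positivity) y
  have := indicator_nonneg (s := (ball (0 : E2) (2 * ‖x‖))ᶜ) (f := fun z => ‖z‖⁻¹ ^ 3)
    (fun _ _ => by positivity) y
  unfold lowerHalfMajorant
  positivity

lemma integrable_lowerHalfMajorant_and_integral_eq {x : E2} (hx : x ≠ 0) :
    Integrable (lowerHalfMajorant x) ∧ ∫ y, lowerHalfMajorant x y = 7 := by
  have hx' : 0 < ‖x‖ := norm_pos_iff.2 hx
  have hnear := (integrable_indicator_ball_inv_norm (‖x‖ / 2)).comp_sub_right x
  have hmid := integrable_indicator_ball_inv_norm (2 * ‖x‖)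
  have hfar := integrable_indicator_compl_ball_inv_norm_pow (by positivity : 0 < 2 * ‖x‖)
  refine ⟨((hnear.add hmid).const_mul _).add (hfar.const_mul _), ?_⟩
  unfold lowerHalfMajorant
  rw [integral_add (by exact (hnear.add hmid).const_mul _) (by exact hfar.const_mul _),
    integral_const_mul, integral_const_mul, integral_add (by exact hnear) (by exact hmid),
    integral_sub_right_eq_self (fun y => (ball (0 : E2) (‖x‖ / 2)).indicator (‖·‖⁻¹) y),
    integral_indicator_ball_inv_norm (by positivity),
    integral_indicator_ball_inv_norm (by positivity),
    integral_indicator_compl_ball_inv_norm_pow (by positivity)]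
  field_simp
  ring

lemma omegaPlus_mul_abs_K2_le_of_far (hα : 0 ≤ α) {x y : E2} (hy1 : 0 < y 1)
    (hxy : y 1 < x 1) (hy : 2 * ‖x‖ ≤ ‖y‖) :
    omegaPlus α y * |K2 (x - y) 0| ≤ 2 * ‖x‖ / π * ‖y‖⁻¹ ^ 3 := by
  have hx := norm_pos_of_apply_one_pos (hy1.trans hxy)
  have hxy' : ‖y‖ / 2 ≤ ‖x - y‖ := by linarith [norm_sub_norm_le y x, norm_sub_rev x y]
  have h1 : |(x - y) 1| ≤ ‖x‖ := by
    rw [PiLp.sub_apply, abs_of_pos (by linarith)]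
    linarith [le_abs_self (x 1), abs_apply_le_norm x 1]
  rw [abs_K2_apply_zero]
  calc omegaPlus α y * (|(x - y) 1| / (2 * π * ‖x - y‖ ^ 2))
      ≤ ‖y‖⁻¹ * (‖x‖ / (2 * π * (‖y‖ / 2) ^ 2)) := by
        have : 0 < ‖y‖ := by linarith
        gcongr
        exact omegaPlus_le_inv_norm hα y
    _ = 2 * ‖x‖ / π * ‖y‖⁻¹ ^ 3 := by field_simp

lemma abs_omegaPlus_mul_K2_le (hα : 0 ≤ α) {x y : E2} (hxy : y 1 < x 1) :
    |omegaPlus α y * K2 (x - y) 0| ≤ lowerHalfMajorant x y := by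
  by_cases hω : omegaPlus α y = 0
  · simpa [hω] using lowerHalfMajorant_nonneg x y
  have hy1 := (norm_lt_and_pos_of_omegaPlus_ne_zero hω).2
  have hx : 0 < ‖x‖ := norm_pos_of_apply_one_pos (hy1.trans hxy)
  have hnear := indicator_nonneg (s := ball (0 : E2) (‖x‖ / 2)) (f := fun z => ‖z‖⁻¹)
    (fun _ _ => by positivity) (y - x)
  have hmid := indicator_nonneg (s := ball (0 : E2) (2 * ‖x‖)) (f := fun z => ‖z‖⁻¹)
    (fun _ _ => by positivity) y
  have hfar := indicator_nonneg (s := (ball (0 : E2) (2 * ‖x‖))ᶜ) (f := fun z => ‖z‖⁻¹ ^ 3)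
    (fun _ _ => by positivity) y
  have hc₁ : 0 ≤ (π * ‖x‖)⁻¹ := by positivity
  have hc₂ : 0 ≤ 2 * ‖x‖ / π := by positivity
  have hK : omegaPlus α y * |K2 (x - y) 0| ≤ omegaPlus α y * (2 * π * ‖x - y‖)⁻¹ := by
    rw [← norm_K2]
    exact mul_le_mul_of_nonneg_left (abs_apply_le_norm _ 0) (omegaPlus_nonneg α y)
  rw [abs_mul, abs_of_nonneg (omegaPlus_nonneg α y), lowerHalfMajorant, mul_add]
  rcases lt_or_ge ‖y - x‖ (‖x‖ / 2) with hyx | hyx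
  · rw [indicator_of_mem (mem_ball_zero_iff.2 hyx)]
    linarith [omegaPlus_mul_inv_le_of_near hα hyx, mul_nonneg hc₁ hmid, mul_nonneg hc₂ hfar]
  rcases lt_or_ge ‖y‖ (2 * ‖x‖) with hy | hy
  · rw [indicator_of_mem (mem_ball_zero_iff.2 hy)]
    have : omegaPlus α y * (2 * π * ‖x - y‖)⁻¹ ≤ (π * ‖x‖)⁻¹ * ‖y‖⁻¹ := by
      rw [mul_comm _ ‖y‖⁻¹]
      exact mul_le_mul (omegaPlus_le_inv_norm hα y)
        (inv_two_pi_norm_sub_le hx (by rwa [norm_sub_rev] at hyx)) (by positivity)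
        (by positivity)
    linarith [mul_nonneg hc₁ hnear, mul_nonneg hc₂ hfar]
  · rw [indicator_of_mem (show y ∈ (ball (0 : E2) (2 * ‖x‖))ᶜ by simpa using hy)]
    linarith [omegaPlus_mul_abs_K2_le_of_far hα hy1 hxy hy, mul_nonneg hc₁ hnear,
      mul_nonneg hc₁ hmid]

lemma neg_seven_le_setIntegral_lowerHalf (hα : 0 ≤ α) {x : E2} (hx : x ≠ 0) :
    -7 ≤ ∫ y in {y : E2 | y 1 < x 1}, omegaPlus α y * K2 (x - y) 0 := by
  obtain ⟨hint, hseven⟩ := integrable_lowerHalfMajorant_and_integral_eq hx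
  have hs : MeasurableSet {y : E2 | y 1 < x 1} :=
    measurableSet_lt (measurable_apply 1) measurable_const
  have habs := norm_integral_le_of_norm_le hint.integrableOn (ae_restrict_of_forall_mem hs
    fun y hy => (Real.norm_eq_abs _).trans_le (abs_omegaPlus_mul_K2_le hα hy))
  have hle := setIntegral_le_integral (s := {y : E2 | y 1 < x 1}) hint
    (Eventually.of_forall (lowerHalfMajorant_nonneg x))
  rw [Real.norm_eq_abs] at habs
  linarith [neg_abs_le (∫ y in {y : E2 | y 1 < x 1}, omegaPlus α y * K2 (x - y) 0)]

/-! ### Lower bound for the first velocity component -/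

noncomputable def upperBall (r : ℝ) : Set E2 := ball !₂[0, 3 / 4 * r] (r / 8)

lemma mem_upperBall {r : ℝ} {y : E2} (hy : y ∈ upperBall r) :
    5 / 8 * r < ‖y‖ ∧ ‖y‖ < 7 / 8 * r ∧ 5 / 8 * r < y 1 := by
  rw [upperBall, mem_ball, dist_eq_norm] at hy
  have hr : 0 < r := by linarith [norm_nonneg (y - !₂[0, 3 / 4 * r])]
  have hc : ‖(!₂[0, 3 / 4 * r] : E2)‖ = 3 / 4 * r := by
    rw [EuclideanSpace.norm_eq, Fin.sum_univ_two]
    simp [abs_of_pos hr, sqrt_sq (by positivity : (0 : ℝ) ≤ 3 / 4 * r)]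
  have h1 := abs_lt.1 ((abs_apply_le_norm _ 1).trans_lt hy)
  have h2 := abs_le.1 (abs_norm_sub_norm_le y !₂[0, 3 / 4 * r])
  simp only [PiLp.sub_apply, Matrix.cons_val_one, Matrix.cons_val_fin_one] at h1
  refine ⟨?_, ?_, ?_⟩ <;> linarith

lemma measurableSet_upperBall (r : ℝ) : MeasurableSet (upperBall r) := measurableSet_ball

lemma volume_upperBall_ne_top (r : ℝ) : volume (upperBall r) ≠ ⊤ := measure_ball_lt_top.ne

lemma measureReal_upperBall {r : ℝ} (hr : 0 ≤ r) :
    volume.real (upperBall r) = π * r ^ 2 / 64 := by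
  rw [Measure.real, upperBall, EuclideanSpace.volume_ball_fin_two, ENNReal.toReal_mul,
    ENNReal.toReal_pow, ENNReal.toReal_ofReal (by positivity), ENNReal.toReal_ofReal pi_pos.le]
  ring

lemma pairwise_disjoint_upperBall :
    Pairwise (Function.onFun Disjoint fun n : ℕ => upperBall (exp (-n))) := by
  suffices h : ∀ m n : ℕ, m < n → Disjoint (upperBall (exp (-m))) (upperBall (exp (-n))) from
    fun m n hmn => hmn.lt_or_gt.elim (h m n) fun h' => (h n m h').symm
  intro m n hmn
  refine disjoint_left.2 fun y hm hn => ?_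
  have hle : exp (-(n : ℝ)) ≤ exp (-m) * exp (-1) := by
    have : (m : ℝ) + 1 ≤ n := by exact_mod_cast hmn
    rw [← exp_add]
    exact exp_le_exp.2 (by linarith)
  have he : exp (-1) < 0.3678794412 := exp_neg_one_lt_d9
  nlinarith [(mem_upperBall hm).1, (mem_upperBall hn).2.1, exp_pos (-(m : ℝ))]

lemma K2_sub_apply_zero_ge_of_mem_upperBall {r : ℝ} {x y : E2} (hx : ‖x‖ ≤ r / 4)
    (hy : y ∈ upperBall r) : 4 / (27 * π * r) ≤ K2 (x - y) 0 := by
  obtain ⟨hy₀, hy₁, hy₂⟩ := mem_upperBall hy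
  have hr : 0 < r := by linarith [norm_nonneg y]
  have hsep : 3 / 8 * r ≤ y 1 - x 1 := by linarith [le_abs_self (x 1), abs_apply_le_norm x 1]
  have hdist : ‖x - y‖ ≤ 9 / 8 * r := by linarith [norm_sub_le x y]
  have hxy : 0 < ‖x - y‖ := by
    have := abs_apply_le_norm (x - y) 1
    rw [PiLp.sub_apply, abs_sub_comm, abs_of_pos (by linarith)] at this
    linarith
  rw [K2_apply_zero, PiLp.sub_apply, neg_sub]
  calc 4 / (27 * π * r) = (2 * π * (9 / 8 * r) ^ 2)⁻¹ * (3 / 8 * r) := by field_simp; ring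
    _ ≤ (2 * π * ‖x - y‖ ^ 2)⁻¹ * (y 1 - x 1) := by gcongr

lemma le_setIntegral_upperBall {ω : E2 → ℝ} {x : E2} {r c : ℝ} (hr : 0 < r) (hc : 0 ≤ c)
    (hx : ‖x‖ ≤ r / 4) (hω : ∀ y ∈ upperBall r, c ≤ ω y)
    (hint : IntegrableOn (fun y => ω y * K2 (x - y) 0) (upperBall r)) :
    c * r / 432 ≤ ∫ y in upperBall r, ω y * K2 (x - y) 0 := by
  have hpt : ∀ y ∈ upperBall r, c * (4 / (27 * π * r)) ≤ ω y * K2 (x - y) 0 := fun y hy =>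
    mul_le_mul (hω y hy) (K2_sub_apply_zero_ge_of_mem_upperBall hx hy) (by positivity)
      (hc.trans (hω y hy))
  calc c * r / 432 = c * (4 / (27 * π * r)) * volume.real (upperBall r) := by
        rw [measureReal_upperBall hr.le]; field_simp; ring
    _ ≤ _ := setIntegral_ge_of_const_le_real (measurableSet_upperBall r)
        (volume_upperBall_ne_top r) hpt hint

lemma exp_div_rpow_le_omegaPlus_of_mem_upperBall (hα : 0 ≤ α) {t : ℝ} (ht : 1 ≤ t) {y : E2}
    (hy : y ∈ upperBall (exp (-t))) : exp t / (t + 1) ^ α ≤ omegaPlus α y := by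
  obtain ⟨hy₀, hy₁, hy₂⟩ := mem_upperBall hy
  have he : exp (-1) < 0.3678794412 := exp_neg_one_lt_d9
  have het : exp (-t) ≤ exp (-1) := exp_le_exp.2 (by linarith)
  have hpos := exp_pos (-t)
  refine exp_div_rpow_le_omegaPlus hα (by nlinarith) (by nlinarith) ?_ (by nlinarith)
  rw [neg_add, exp_add]
  nlinarith

lemma sum_le_setIntegral_upperHalf (hα : 0 ≤ α) {x : E2} (hx : x ≠ 0) {M : ℕ}
    (hM : 4 * ‖x‖ ≤ exp (-M)) :
    (∑ m ∈ Finset.Icc 2 M, (((m : ℝ) + 1) ^ α)⁻¹) / 432 ≤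
      ∫ y in {y : E2 | x 1 ≤ y 1}, omegaPlus α y * K2 (x - y) 0 := by
  have hint := integrable_mul_K2_apply_zero (integrable_omegaPlus_smul_K2 hα hx)
  have hx_small : ∀ m ∈ Finset.Icc 2 M, ‖x‖ ≤ exp (-(m : ℝ)) / 4 := fun m hm => by
    have : (m : ℝ) ≤ M := by exact_mod_cast (Finset.mem_Icc.1 hm).2
    linarith [exp_le_exp.2 (neg_le_neg this)]
  have hball : ∀ m ∈ Finset.Icc 2 M, (((m : ℝ) + 1) ^ α)⁻¹ / 432 ≤
      ∫ y in upperBall (exp (-(m : ℝ))), omegaPlus α y * K2 (x - y) 0 := fun m hm => by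
    have hm1 : (1 : ℝ) ≤ m := by exact_mod_cast (by linarith [(Finset.mem_Icc.1 hm).1] : 1 ≤ m)
    calc (((m : ℝ) + 1) ^ α)⁻¹ / 432 = exp m / ((m : ℝ) + 1) ^ α * exp (-(m : ℝ)) / 432 := by
          rw [exp_neg]; field_simp
      _ ≤ _ := le_setIntegral_upperBall (exp_pos _) (by positivity) (hx_small m hm)
          (fun y hy => exp_div_rpow_le_omegaPlus_of_mem_upperBall hα hm1 hy) hint.integrableOn
  have hsub : (⋃ m ∈ Finset.Icc 2 M, upperBall (exp (-(m : ℝ)))) ⊆ {y : E2 | x 1 ≤ y 1} := by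
    intro y hy
    obtain ⟨m, hm, hym⟩ := mem_iUnion₂.1 hy
    have := (mem_upperBall hym).2.2
    show x 1 ≤ y 1
    linarith [hx_small m hm, le_abs_self (x 1), abs_apply_le_norm x 1, exp_pos (-(m : ℝ))]
  have hnonneg : 0 ≤ᵐ[volume.restrict {y : E2 | x 1 ≤ y 1}] fun y =>
      omegaPlus α y * K2 (x - y) 0 :=
    ae_restrict_of_forall_mem (measurableSet_le measurable_const (measurable_apply 1))
      fun y hy => mul_nonneg (omegaPlus_nonneg α y) (K2_sub_apply_zero_nonneg hy)
  rw [Finset.sum_div]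
  calc ∑ m ∈ Finset.Icc 2 M, (((m : ℝ) + 1) ^ α)⁻¹ / 432
      ≤ ∑ m ∈ Finset.Icc 2 M, ∫ y in upperBall (exp (-(m : ℝ))), omegaPlus α y * K2 (x - y) 0 :=
        Finset.sum_le_sum hball
    _ = ∫ y in ⋃ m ∈ Finset.Icc 2 M, upperBall (exp (-(m : ℝ))), omegaPlus α y * K2 (x - y) 0 :=
        (integral_biUnion_finset _ (fun m _ => measurableSet_upperBall _)
          (pairwise_disjoint_upperBall.set_pairwise _) fun _ _ => hint.integrableOn).symm
    _ ≤ ∫ y in {y : E2 | x 1 ≤ y 1}, omegaPlus α y * K2 (x - y) 0 :=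
        setIntegral_mono_set hint.integrableOn hnonneg (Eventually.of_forall hsub)

lemma rpow_one_sub_div_two_le_sum (hα : 0 ≤ α) {t : ℝ} (ht : 8 ≤ t) :
    t ^ (1 - α) / 2 ≤ ∑ m ∈ Finset.Icc 2 (⌊t⌋₊ - 2), (((m : ℝ) + 1) ^ α)⁻¹ := by
  have hfloor : (8 : ℕ) ≤ ⌊t⌋₊ := Nat.le_floor (by exact_mod_cast ht)
  have hcard : t / 2 ≤ ((Finset.Icc 2 (⌊t⌋₊ - 2)).card : ℝ) := by
    rw [Nat.card_Icc, show ⌊t⌋₊ - 2 + 1 - 2 = ⌊t⌋₊ - 3 by omega, Nat.cast_sub (by omega)]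
    push_cast
    linarith [Nat.lt_floor_add_one t]
  have hterm : ∀ m ∈ Finset.Icc 2 (⌊t⌋₊ - 2), (t ^ α)⁻¹ ≤ (((m : ℝ) + 1) ^ α)⁻¹ := by
    intro m hm
    have : m + 2 ≤ ⌊t⌋₊ := by have := (Finset.mem_Icc.1 hm).2; omega
    have : (m : ℝ) + 2 ≤ ⌊t⌋₊ := by exact_mod_cast this
    have : (m : ℝ) + 1 ≤ t := by linarith [Nat.floor_le (by linarith : 0 ≤ t)]
    gcongr
  calc t ^ (1 - α) / 2 = t / 2 * (t ^ α)⁻¹ := by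
        rw [rpow_sub (by linarith), rpow_one]; ring
    _ ≤ (Finset.Icc 2 (⌊t⌋₊ - 2)).card * (t ^ α)⁻¹ := by gcongr
    _ ≤ _ := by simpa using Finset.card_nsmul_le_sum _ _ _ hterm

lemma four_mul_exp_neg_le_exp_neg_floor_sub_two {t : ℝ} (ht : 8 ≤ t) :
    4 * exp (-t) ≤ exp (-((⌊t⌋₊ - 2 : ℕ) : ℝ)) := by
  have h4 : (4 : ℝ) ≤ exp 2 := by
    rw [show (2 : ℝ) = 1 + 1 by norm_num, exp_add]; nlinarith [exp_one_gt_d9]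
  have hM : ((⌊t⌋₊ - 2 : ℕ) : ℝ) ≤ t - 2 := by
    rw [Nat.cast_sub (Nat.le_floor (by push_cast; linarith))]
    push_cast
    linarith [Nat.floor_le (by linarith : 0 ≤ t)]
  calc 4 * exp (-t) ≤ exp 2 * exp (-t) := by gcongr
    _ = exp (-(t - 2)) := by rw [← exp_add]; ring_nf
    _ ≤ _ := exp_le_exp.2 (by linarith)

lemma vel_omegaPlus_apply_zero_ge (hα : 0 ≤ α) {x : E2} (hx : 8 ≤ -log ‖x‖) :
    (-log ‖x‖) ^ (1 - α) / 864 - 7 ≤ vel (omegaPlus α) x 0 := by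
  have hx0 : x ≠ 0 := by rintro rfl; norm_num at hx
  have hM := four_mul_exp_neg_le_exp_neg_floor_sub_two hx
  rw [neg_neg, exp_log (norm_pos_iff.2 hx0)] at hM
  have hint := integrable_omegaPlus_smul_K2 hα hx0
  have hupper := sum_le_setIntegral_upperHalf hα hx0 hM
  have hlower := neg_seven_le_setIntegral_lowerHalf hα hx0
  have hsum := rpow_one_sub_div_two_le_sum hα hx
  have hcompl : {y : E2 | x 1 ≤ y 1}ᶜ = {y : E2 | y 1 < x 1} := by ext; simp
  rw [vel_apply_zero hint, ← integral_add_compl (measurableSet_le measurable_const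
    (measurable_apply 1)) (integrable_mul_K2_apply_zero hint), hcompl]
  linarith

/-! ### Divergence of `∫ u₁ |ω^α_+|²` -/

/-- For `t ≥ logCutoff` and `α ≤ 2/3`, `t ^ (1 - α) ≥ 12096 = 2 · 864 · 7`, so the bound of
`vel_omegaPlus_apply_zero_ge` is at least `t ^ (1 - α) / 1728`. -/
def logCutoff : ℕ := 12096 ^ 3

lemma le_rpow_one_sub_of_pow_three_le {c t : ℝ} (hα : α ≤ 2 / 3) (hc : 1 ≤ c) (h : c ^ 3 ≤ t) :
    c ≤ t ^ (1 - α) := by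
  have ht : 1 ≤ t := by nlinarith [one_le_pow₀ (n := 3) hc]
  calc c = (c ^ 3) ^ (3⁻¹ : ℝ) := (pow_rpow_inv_natCast (by positivity) (by norm_num)).symm
    _ ≤ t ^ (3⁻¹ : ℝ) := rpow_le_rpow (by positivity) h (by norm_num)
    _ ≤ t ^ (1 - α) := rpow_le_rpow_of_exponent_le ht (by linarith)

lemma vel_omegaPlus_apply_zero_ge_of_cutoff_le (hα₀ : 0 ≤ α) (hα : α ≤ 2 / 3) {x : E2}
    (hx : (logCutoff : ℝ) ≤ -log ‖x‖) :
    (-log ‖x‖) ^ (1 - α) / 1728 ≤ vel (omegaPlus α) x 0 := by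
  have hbig : 12096 ≤ (-log ‖x‖) ^ (1 - α) :=
    le_rpow_one_sub_of_pow_three_le hα (by norm_num) (by norm_num [logCutoff] at hx ⊢; exact hx)
  have := vel_omegaPlus_apply_zero_ge hα₀ (x := x)
    (by linarith [(by norm_num [logCutoff] : (8 : ℝ) ≤ logCutoff)])
  linarith

lemma le_neg_log_of_norm_lt_exp_neg {x : E2} {t : ℝ} (hx : x ≠ 0) (h : ‖x‖ < exp (-t)) :
    t ≤ -log ‖x‖ := by
  linarith [(log_lt_iff_lt_exp (norm_pos_iff.2 hx)).2 h]

lemma inv_two_mul_le_rpow_div_rpow_sq (hα₀ : 0 ≤ α) (hα : α ≤ 2 / 3) {n : ℝ} (hn : 1 ≤ n) :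
    (2 * (n + 1))⁻¹ ≤ n ^ (1 - α) / ((n + 1) ^ α) ^ 2 := by
  have h1 : (n + 1) ^ (1 - α) ≤ 2 * n ^ (1 - α) :=
    calc (n + 1) ^ (1 - α) ≤ (2 * n) ^ (1 - α) :=
          rpow_le_rpow (by linarith) (by linarith) (by linarith)
      _ = 2 ^ (1 - α) * n ^ (1 - α) := mul_rpow (by norm_num) (by linarith)
      _ ≤ 2 * n ^ (1 - α) := by
        gcongr
        exact (rpow_le_rpow_of_exponent_le (by norm_num) (by linarith : 1 - α ≤ 1)).trans_eq
          (rpow_one 2)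
  have h2 : (n + 1)⁻¹ ≤ (n + 1) ^ (1 - α) / ((n + 1) ^ α) ^ 2 := by
    rw [← rpow_natCast, ← rpow_mul (by linarith), ← rpow_sub (by linarith), ← rpow_neg_one]
    exact rpow_le_rpow_of_exponent_le (by linarith) (by push_cast; linarith)
  rw [mul_inv]
  calc 2⁻¹ * (n + 1)⁻¹ ≤ 2⁻¹ * ((n + 1) ^ (1 - α) / ((n + 1) ^ α) ^ 2) := by gcongr
    _ ≤ n ^ (1 - α) / ((n + 1) ^ α) ^ 2 := by
      rw [← mul_div_assoc]; gcongr; linarith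

lemma ofReal_le_setLIntegral_upperBall (hα₀ : 0 ≤ α) (hα : α ≤ 2 / 3) {n : ℕ}
    (hn : logCutoff ≤ n) :
    ENNReal.ofReal (π / 221184 / (n + 1)) ≤ ∫⁻ x in upperBall (exp (-n)),
      ENNReal.ofReal (vel (omegaPlus α) x 0 * omegaPlus α x ^ 2) := by
  have hn1 : (1 : ℝ) ≤ n := by
    exact_mod_cast (by norm_num [logCutoff] : 1 ≤ logCutoff).trans hn
  set c := (n : ℝ) ^ (1 - α) / 1728 * (exp n / ((n : ℝ) + 1) ^ α) ^ 2
  have hpt : ∀ x ∈ upperBall (exp (-n)), c ≤ vel (omegaPlus α) x 0 * omegaPlus α x ^ 2 := by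
    intro x hx
    obtain ⟨hx₀, hx₁, -⟩ := mem_upperBall hx
    have hx0 : x ≠ 0 := norm_pos_iff.1 (lt_of_le_of_lt (by positivity) hx₀)
    have hnlog := le_neg_log_of_norm_lt_exp_neg hx0 (t := n) (by linarith [exp_pos (-(n : ℝ))])
    have hlog : (logCutoff : ℝ) ≤ -log ‖x‖ := le_trans (by exact_mod_cast hn) hnlog
    have hvel : (n : ℝ) ^ (1 - α) / 1728 ≤ vel (omegaPlus α) x 0 :=
      le_trans (by gcongr; linarith) (vel_omegaPlus_apply_zero_ge_of_cutoff_le hα₀ hα hlog)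
    have hω := exp_div_rpow_le_omegaPlus_of_mem_upperBall hα₀ hn1 hx
    exact mul_le_mul hvel (by gcongr) (by positivity) (le_trans (by positivity) hvel)
  calc ENNReal.ofReal (π / 221184 / (n + 1))
      ≤ ENNReal.ofReal (c * volume.real (upperBall (exp (-n)))) := by
        refine ENNReal.ofReal_le_ofReal ?_
        rw [measureReal_upperBall (exp_pos _).le]
        have := inv_two_mul_le_rpow_div_rpow_sq hα₀ hα hn1
        calc π / 221184 / (n + 1) = π / 110592 * (2 * ((n : ℝ) + 1))⁻¹ := by field_simp; ring
          _ ≤ π / 110592 * ((n : ℝ) ^ (1 - α) / (((n : ℝ) + 1) ^ α) ^ 2) := by gcongr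
          _ = c * (π * exp (-n) ^ 2 / 64) := by
            simp only [c]; rw [exp_neg]; field_simp; ring
    _ = ∫⁻ _ in upperBall (exp (-n)), ENNReal.ofReal c := by
        rw [setLIntegral_const, ENNReal.ofReal_mul (by positivity), ofReal_measureReal
          (volume_upperBall_ne_top _), mul_comm]
    _ ≤ _ := lintegral_mono_ae (ae_restrict_of_forall_mem (measurableSet_upperBall _)
        fun x hx => ENNReal.ofReal_le_ofReal (hpt x hx))

lemma tsum_ofReal_div_add_one_eq_top {c : ℝ} (hc : 0 < c) (N : ℕ) :
    ∑' k : ℕ, ENNReal.ofReal (c / ((N + k : ℕ) + 1)) = ⊤ := by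
  by_contra h
  have hsum : Summable fun k : ℕ => c / ((k + (N + 1) : ℕ) : ℝ) := by
    refine (ENNReal.summable_toReal h).congr fun k => ?_
    rw [ENNReal.toReal_ofReal (by positivity)]
    push_cast; ring_nf
  have := ((summable_nat_add_iff (f := fun k : ℕ => c / (k : ℝ)) (N + 1)).1 hsum).mul_left c⁻¹
  refine Real.not_summable_one_div_natCast (this.congr fun k => ?_)
  field_simp

lemma setLIntegral_vel_mul_omegaPlus_sq_eq_top (hα₀ : 0 ≤ α) (hα : α ≤ 2 / 3) :
    ∫⁻ x in {x : E2 | ‖x‖ < exp (-(logCutoff : ℝ)) ∧ 0 < x 1},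
      ENNReal.ofReal (vel (omegaPlus α) x 0 * omegaPlus α x ^ 2) = ⊤ := by
  set N := logCutoff
  have hsub : (⋃ k : ℕ, upperBall (exp (-((N + k : ℕ) : ℝ)))) ⊆
      {x : E2 | ‖x‖ < exp (-(N : ℝ)) ∧ 0 < x 1} := by
    intro x hx
    obtain ⟨k, hk⟩ := mem_iUnion.1 hx
    obtain ⟨hx₀, hx₁, hx₂⟩ := mem_upperBall hk
    have hpos := exp_pos (-((N + k : ℕ) : ℝ))
    have hle : exp (-((N + k : ℕ) : ℝ)) ≤ exp (-(N : ℝ)) :=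
      exp_le_exp.2 (by push_cast; linarith [(k.cast_nonneg : (0 : ℝ) ≤ k)])
    exact ⟨by linarith, by linarith⟩
  refine eq_top_iff.2 ?_
  calc ⊤ = ∑' k : ℕ, ENNReal.ofReal (π / 221184 / ((N + k : ℕ) + 1)) :=
        (tsum_ofReal_div_add_one_eq_top (by positivity) N).symm
    _ ≤ ∑' k : ℕ, ∫⁻ x in upperBall (exp (-((N + k : ℕ) : ℝ))),
          ENNReal.ofReal (vel (omegaPlus α) x 0 * omegaPlus α x ^ 2) :=
        ENNReal.tsum_le_tsum fun k => ofReal_le_setLIntegral_upperBall hα₀ hα (by omega)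
    _ = ∫⁻ x in ⋃ k : ℕ, upperBall (exp (-((N + k : ℕ) : ℝ))),
          ENNReal.ofReal (vel (omegaPlus α) x 0 * omegaPlus α x ^ 2) :=
        (lintegral_iUnion (s := fun k : ℕ => upperBall (exp (-((N + k : ℕ) : ℝ))))
          (fun _ => measurableSet_upperBall _)
          (fun i j hij => pairwise_disjoint_upperBall (show N + i ≠ N + j by omega)) _).symm
    _ ≤ _ := lintegral_mono_set hsub

lemma not_locallyIntegrable_of_setLIntegral_eq_top {X F : Type*} [MeasurableSpace X]
    [PseudoMetricSpace X] [ProperSpace X] {μ : Measure X} [NormedAddCommGroup F] {G : X → F}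
    {g : X → ℝ} {s : Set X} (hs : Bornology.IsBounded s) (hg : ∀ x, g x ≤ ‖G x‖)
    (h : ∫⁻ x in s, ENNReal.ofReal (g x) ∂μ = ⊤) : ¬ LocallyIntegrable G μ := by
  intro hG
  have hfin := ((hG.integrableOn_isCompact hs.isCompact_closure).mono_set subset_closure).2
  refine (lt_of_le_of_lt ?_ hfin).ne h
  exact lintegral_mono fun x => (ENNReal.ofReal_le_ofReal (hg x)).trans_eq (ofReal_norm _)

end CubicTerm

open CubicTerm in
/-- for `1/2 < α ≤ 2/3` there is `r₀ > 0` such that the first component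
`u₁` of `K ∗ ω^α_+` is nonnegative on `B⁺(0;r₀)` and `∫_{B⁺(0;r₀)} u₁ |ω^α_+|² = +∞`;
in particular `(K ∗ ω^α_+) |ω^α_+|²` is not locally integrable on `ℝ²`. -/
theorem cubic_term_not_locally_integrable (α : ℝ) (hα1 : 1/2 < α) (hα2 : α ≤ 2/3) :
    ∃ r0 : ℝ, 0 < r0 ∧
      (∀ x : E2, ‖x‖ < r0 → 0 < x 1 → 0 ≤ vel (omegaPlus α) x 0) ∧
      (∫⁻ x in {x : E2 | ‖x‖ < r0 ∧ 0 < x 1},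
          ENNReal.ofReal (vel (omegaPlus α) x 0 * omegaPlus α x ^ 2) = ⊤) ∧
      ¬ LocallyIntegrable (fun x => omegaPlus α x ^ 2 • vel (omegaPlus α) x) volume := by
  have hα₀ : 0 ≤ α := by linarith
  have htop := setLIntegral_vel_mul_omegaPlus_sq_eq_top hα₀ hα2
  refine ⟨exp (-(logCutoff : ℝ)), exp_pos _, fun x hx hx1 => ?_, htop, ?_⟩
  · have hlog := le_neg_log_of_norm_lt_exp_neg (norm_pos_iff.1 (norm_pos_of_apply_one_pos hx1)) hx
    have : 0 ≤ -log ‖x‖ := (Nat.cast_nonneg _).trans hlog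
    exact le_trans (by positivity) (vel_omegaPlus_apply_zero_ge_of_cutoff_le hα₀ hα2 hlog)
  · refine not_locallyIntegrable_of_setLIntegral_eq_top
      ((isBounded_ball (x := (0 : E2))).subset fun x hx => mem_ball_zero_iff.2 hx.1)
      (fun x => ?_) htop
    calc vel (omegaPlus α) x 0 * omegaPlus α x ^ 2
        = (omegaPlus α x ^ 2 • vel (omegaPlus α) x) 0 := by
          rw [PiLp.smul_apply, smul_eq_mul, mul_comm]
      _ ≤ ‖omegaPlus α x ^ 2 • vel (omegaPlus α) x‖ :=
          (le_abs_self _).trans (abs_apply_le_norm _ 0)
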